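/- Let A be a Hopf algebra and M a right A-comodule algebra. If there exists an algebra map γ: A → M^op ⊗ M, written γ(a) = Σ a⁻ ⊗ a⁺, satisfying Σ m₍₀₎ m₍₁₎⁻ ⊗ m₍₁₎⁺ = 1 ⊗ m for all m ∈ M and Σ a⁻ a⁺₍₀₎ ⊗ a⁺₍₁₎ = 1 ⊗ a for all a ∈ A, then the Galois map κ_r: M⊗M → M⊗A, m⊗n ↦ Σ m n₍₀₎ ⊗ n₍₁₎, is bijective (i.e., M is a right A-Galois extension of k), with inverse m⊗a ↦ Σ m a⁻ ⊗ a⁺. -/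
import Mathlib


open scoped TensorProduct

/-- Given `f : P →ₗ M ⊗ Q`, the map `M ⊗ P →ₗ M ⊗ Q`, `m ⊗ p ↦ Σ (m·f(p)₁) ⊗ f(p)₂`.
For `f = δ` the coaction of a comodule algebra this is the Galois map
`κ_r : m ⊗ n ↦ Σ m n₍₀₎ ⊗ n₍₁₎`; for `f = γ̃ : A →ₗ M ⊗ M` it is the candidate inverse
`m ⊗ a ↦ Σ m a⁻ ⊗ a⁺`. -/
noncomputable def twistMul (k : Type*) [CommRing k] (M P Q : Type*)
    [Ring M] [Algebra k M] [AddCommGroup P] [Module k P] [AddCommGroup Q] [Module k Q]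
    (f : P →ₗ[k] M ⊗[k] Q) : M ⊗[k] P →ₗ[k] M ⊗[k] Q :=
  (LinearMap.mul' k M).rTensor Q ∘ₗ (TensorProduct.assoc k M M Q).symm.toLinearMap ∘ₗ
    LinearMap.lTensor M f

/-- `γ̃ : A →ₗ M ⊗ M` obtained from an algebra map `γ : A →ₐ M^op ⊗ M` by forgetting
the opposite-algebra structure on the first factor. -/
noncomputable def gammaTilde (k : Type*) [CommRing k] (M A : Type*)
    [Ring M] [Algebra k M] [Ring A] [Algebra k A]
    (γ : A →ₐ[k] Mᵐᵒᵖ ⊗[k] M) : A →ₗ[k] M ⊗[k] M :=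
  TensorProduct.map ((MulOpposite.opLinearEquiv k).symm :
      Mᵐᵒᵖ ≃ₗ[k] M).toLinearMap LinearMap.id ∘ₗ γ.toLinearMap


lemma twistMul_tmul (k : Type*) [CommRing k] (M P Q : Type*)
    [Ring M] [Algebra k M] [AddCommGroup P] [Module k P] [AddCommGroup Q] [Module k Q]
    (f : P →ₗ[k] M ⊗[k] Q) (m : M) (p : P) :
    twistMul k M P Q f (m ⊗ₜ p) =
      (LinearMap.mulLeft k m).rTensor Q (f p) := by
  simp only [twistMul, LinearMap.comp_apply, LinearMap.lTensor_tmul]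
  induction f p using TensorProduct.induction_on with
  | zero => simp
  | tmul n q => simp [LinearMap.mulLeft_apply]
  | add x y hx hy => simp_all [TensorProduct.tmul_add]

lemma twistMul_mulLeft (k : Type*) [CommRing k] (M P Q : Type*)
    [Ring M] [Algebra k M] [AddCommGroup P] [Module k P] [AddCommGroup Q] [Module k Q]
    (f : P →ₗ[k] M ⊗[k] Q) (m : M) (x : M ⊗[k] P) :
    twistMul k M P Q f ((LinearMap.mulLeft k m).rTensor P x) =
      (LinearMap.mulLeft k m).rTensor Q (twistMul k M P Q f x) := by
  induction x using TensorProduct.induction_on with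
  | zero => simp
  | tmul n p =>
      simp only [LinearMap.rTensor_tmul, LinearMap.mulLeft_apply, twistMul_tmul]
      induction f p using TensorProduct.induction_on with
      | zero => simp
      | tmul n' q => simp [mul_assoc]
      | add x y hx hy => simp_all
  | add x y hx hy => simp_all

lemma twistMul_twistMul (k : Type*) [CommRing k] (M P Q : Type*)
    [Ring M] [Algebra k M] [AddCommGroup P] [Module k P] [AddCommGroup Q] [Module k Q]
    (f : P →ₗ[k] M ⊗[k] Q) (g : Q →ₗ[k] M ⊗[k] P)
    (h : ∀ p : P, twistMul k M Q P g (f p) = 1 ⊗ₜ[k] p) (x : M ⊗[k] P) :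
    twistMul k M Q P g (twistMul k M P Q f x) = x := by
  induction x using TensorProduct.induction_on with
  | zero => simp
  | tmul m p =>
      rw [twistMul_tmul, twistMul_mulLeft, h]
      simp
  | add x y hx hy => simp_all

/-- If `M` is a right `A`-comodule algebra over a Hopf algebra `A` and there is an algebra
map `γ : A → M^op ⊗ M`, `γ(a) = Σ a⁻ ⊗ a⁺`, with `Σ m₍₀₎ m₍₁₎⁻ ⊗ m₍₁₎⁺ = 1 ⊗ m` and
`Σ a⁻ a⁺₍₀₎ ⊗ a⁺₍₁₎ = 1 ⊗ a`, then the Galois map `κ_r : M ⊗ M → M ⊗ A`,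
`m ⊗ n ↦ Σ m n₍₀₎ ⊗ n₍₁₎`, is bijective with inverse `m ⊗ a ↦ Σ m a⁻ ⊗ a⁺`;
i.e. `M` is a right `A`-Galois extension of `k`. -/
theorem right_galois_of_gamma {k A M : Type*} [CommRing k]
    [Ring A] [HopfAlgebra k A] [Ring M] [Algebra k M]
    (δ : M →ₐ[k] M ⊗[k] A)
    (hcoassoc : ∀ m : M,
      (TensorProduct.assoc k M A A) ((δ.toLinearMap.rTensor A) (δ m)) =
        (LinearMap.lTensor M (Coalgebra.comul (R := k) (A := A))) (δ m))
    (hcounit : ∀ m : M,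
      (TensorProduct.rid k M)
        ((LinearMap.lTensor M (Coalgebra.counit (R := k) (A := A))) (δ m)) = m)
    (γ : A →ₐ[k] Mᵐᵒᵖ ⊗[k] M)
    (h1 : ∀ m : M, twistMul k M A M (gammaTilde k M A γ) (δ m) = 1 ⊗ₜ[k] m)
    (h2 : ∀ a : A, twistMul k M M A δ.toLinearMap ((gammaTilde k M A γ) a) = 1 ⊗ₜ[k] a) :
    Function.Bijective (twistMul k M M A δ.toLinearMap) ∧
    (∀ x : M ⊗[k] A,
      twistMul k M M A δ.toLinearMap (twistMul k M A M (gammaTilde k M A γ) x) = x) ∧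
    (∀ x : M ⊗[k] M,
      twistMul k M A M (gammaTilde k M A γ) (twistMul k M M A δ.toLinearMap x) = x) := by
  have hr : ∀ x : M ⊗[k] A,
      twistMul k M M A δ.toLinearMap (twistMul k M A M (gammaTilde k M A γ) x) = x :=
    twistMul_twistMul k M A M (gammaTilde k M A γ) δ.toLinearMap h2
  have hl : ∀ x : M ⊗[k] M,
      twistMul k M A M (gammaTilde k M A γ) (twistMul k M M A δ.toLinearMap x) = x :=
    twistMul_twistMul k M M A δ.toLinearMap (gammaTilde k M A γ) h1
  exact ⟨Function.bijective_iff_has_inverse.2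
    ⟨twistMul k M A M (gammaTilde k M A γ), hl, hr⟩, hr, hl⟩
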